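/- arXiv:1507.03373 — 2 statements merged into one kernel-verified Lean document; each statement's English description precedes it below -/
import Mathlib

section
/- Assume γ_{k₀*-1} < 1 < γ_{k₀*}. Then there exists Λ̃ such that for all λ > Λ̃: (1) ‖u‖_λ² - D_λ(u,u) ≤ ½(1 - 1/γ_{k₀*-1})‖u‖_λ² for all u in ⊕_{i=1}^{k₀*-1} F_{λ,i}^⊥; (2) ‖u‖_λ² - D_λ(u,u) ≥ ½(1 - 1/γ_{k₀*})‖u‖_λ² for all u ∈ F_{λ,k₀*}^{⊥,*}. -/
/-!
If `‖u‖² ≤ β D(u,u)` then `‖u‖² - D(u,u) ≤ (1 - 1/β) ‖u‖²`, and the reverse bound holds on the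
space where the Rayleigh quotient is at least `β`. For the harmonic mean `t = 2γ/(γ+1)` of `γ`
and `1` one has `1 - 1/t = ½(1 - 1/γ)` exactly, and `t` lies strictly between `γ` and `1`.
Hence once `β_{k₀*-1}(λ)` has dropped below its threshold and `β_{k₀*}(λ)` has risen above its
one, which happens for large `λ` since `β_i(λ) → γ_i`, both estimates hold.
-/

open Filter Topology

lemma lt_two_mul_div_add_one {γ : ℝ} (hγ₀ : 0 < γ) (hγ₁ : γ < 1) :
    γ < 2 * γ / (γ + 1) := by
  rw [lt_div_iff₀ (by linarith)]
  nlinarith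

lemma two_mul_div_add_one_lt {γ : ℝ} (hγ : 1 < γ) :
    2 * γ / (γ + 1) < γ := by
  rw [div_lt_iff₀ (by linarith)]
  nlinarith

lemma half_one_sub_inv_mul_eq {γ : ℝ} (hγ : 0 < γ) (N : ℝ) :
    1 / 2 * (1 - 1 / γ) * N = N - (γ + 1) * N / (2 * γ) := by
  field_simp
  ring

lemma sub_le_half_one_sub_inv_mul_of_le_mul {γ β N D : ℝ} (hγ : 0 < γ) (hD : 0 ≤ D)
    (hβ : β ≤ 2 * γ / (γ + 1)) (hN : N ≤ β * D) :
    N - D ≤ 1 / 2 * (1 - 1 / γ) * N := by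
  have hβ' : β * (γ + 1) ≤ 2 * γ := (le_div_iff₀ (by linarith)).mp hβ
  have key : (γ + 1) * N ≤ 2 * γ * D := calc
    (γ + 1) * N ≤ (γ + 1) * (β * D) := mul_le_mul_of_nonneg_left hN (by linarith)
    _ = β * (γ + 1) * D := by ring
    _ ≤ 2 * γ * D := mul_le_mul_of_nonneg_right hβ' hD
  rw [half_one_sub_inv_mul_eq hγ, sub_le_sub_iff_left, div_le_iff₀ (by linarith)]
  linarith

lemma half_one_sub_inv_mul_le_sub_of_mul_le {γ β N D : ℝ} (hγ : 0 < γ) (hD : 0 ≤ D)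
    (hβ : 2 * γ / (γ + 1) ≤ β) (hN : β * D ≤ N) :
    1 / 2 * (1 - 1 / γ) * N ≤ N - D := by
  have hβ' : 2 * γ ≤ β * (γ + 1) := (div_le_iff₀ (by linarith)).mp hβ
  have key : 2 * γ * D ≤ (γ + 1) * N := calc
    2 * γ * D ≤ β * (γ + 1) * D := mul_le_mul_of_nonneg_right hβ' hD
    _ = (γ + 1) * (β * D) := by ring
    _ ≤ (γ + 1) * N := mul_le_mul_of_nonneg_left hN (by linarith)
  rw [half_one_sub_inv_mul_eq hγ, sub_le_sub_iff_left, le_div_iff₀ (by linarith)]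
  linarith

theorem stmt8_general {H : Type*}
    (Nsq D : ℝ → H → ℝ) (Vlow Vhigh : ℝ → Set H)
    (betalow betahigh : ℝ → ℝ) (gammalow gammahigh : ℝ)
    (hgammalow_pos : 0 < gammalow)
    (hgammalow : gammalow < 1) (hgammahigh : 1 < gammahigh)
    (hblow : Tendsto betalow atTop (𝓝 gammalow))
    (hbhigh : Tendsto betahigh atTop (𝓝 gammahigh))
    (hDnonneg : ∀ lam u, 0 ≤ D lam u)
    (hlow : ∀ lam, ∀ u ∈ Vlow lam, Nsq lam u ≤ betalow lam * D lam u)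
    (hhigh : ∀ lam, ∀ u ∈ Vhigh lam, betahigh lam * D lam u ≤ Nsq lam u) :
    ∃ LamT : ℝ, ∀ lam : ℝ, LamT < lam →
      (∀ u ∈ Vlow lam,
        Nsq lam u - D lam u ≤ (1 / 2) * (1 - 1 / gammalow) * Nsq lam u) ∧
      (∀ u ∈ Vhigh lam,
        (1 / 2) * (1 - 1 / gammahigh) * Nsq lam u ≤ Nsq lam u - D lam u) := by
  have hlow_eventually : ∀ᶠ lam in atTop, betalow lam ≤ 2 * gammalow / (gammalow + 1) :=
    hblow.eventually_le_const (lt_two_mul_div_add_one hgammalow_pos hgammalow)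
  have hhigh_eventually : ∀ᶠ lam in atTop, 2 * gammahigh / (gammahigh + 1) ≤ betahigh lam :=
    hbhigh.eventually_const_le (two_mul_div_add_one_lt hgammahigh)
  obtain ⟨LamT, hLamT⟩ := (hlow_eventually.and hhigh_eventually).exists_forall_of_atTop
  refine ⟨LamT, fun lam hlam => ⟨fun u hu => ?_, fun u hu => ?_⟩⟩
  · exact sub_le_half_one_sub_inv_mul_of_le_mul hgammalow_pos (hDnonneg lam u)
      (hLamT lam hlam.le).1 (hlow lam u hu)
  · exact half_one_sub_inv_mul_le_sub_of_mul_le (by linarith) (hDnonneg lam u)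
      (hLamT lam hlam.le).2 (hhigh lam u hu)

/-- Assume `γ_{k₀*-1} < 1 < γ_{k₀*}`.  Then there exists `Λ̃` such that
for all `λ > Λ̃`: (1) `‖u‖_λ² - D_λ(u,u) ≤ ½(1 - 1/γ_{k₀*-1})‖u‖_λ²` on
`⊕_{i=1}^{k₀*-1} F_{λ,i}^⊥` (here `Vlow lam`); (2)
`‖u‖_λ² - D_λ(u,u) ≥ ½(1 - 1/γ_{k₀*})‖u‖_λ²` on `F_{λ,k₀*}^{⊥,*}` (here `Vhigh lam`).
`Nsq lam u = ‖u‖_λ²`, `D lam u = D_λ(u,u)`; on `Vlow lam` the Rayleigh quotient is at most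
`β_{k₀*-1}(λ)` and on `Vhigh lam` at least `β_{k₀*}(λ)`, with `β_i(λ) → γ_i` as
`λ → +∞`. -/
theorem stmt8 {H : Type*} [AddCommGroup H] [Module ℝ H]
    (Nsq D : ℝ → H → ℝ) (Vlow Vhigh : ℝ → Set H)
    (betalow betahigh : ℝ → ℝ) (gammalow gammahigh : ℝ)
    (hgammalow_pos : 0 < gammalow)
    (hgammalow : gammalow < 1) (hgammahigh : 1 < gammahigh)
    (hblow : Tendsto betalow atTop (𝓝 gammalow))
    (hbhigh : Tendsto betahigh atTop (𝓝 gammahigh))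
    (hNnonneg : ∀ lam u, 0 ≤ Nsq lam u)
    (hDnonneg : ∀ lam u, 0 ≤ D lam u)
    (hlow : ∀ lam, ∀ u ∈ Vlow lam, Nsq lam u ≤ betalow lam * D lam u)
    (hhigh : ∀ lam, ∀ u ∈ Vhigh lam, betahigh lam * D lam u ≤ Nsq lam u) :
    ∃ LamT : ℝ, ∀ lam : ℝ, LamT < lam →
      (∀ u ∈ Vlow lam,
        Nsq lam u - D lam u ≤ (1 / 2) * (1 - 1 / gammalow) * Nsq lam u) ∧
      (∀ u ∈ Vhigh lam,
        (1 / 2) * (1 - 1 / gammahigh) * Nsq lam u ≤ Nsq lam u - D lam u) :=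
  stmt8_general Nsq D Vlow Vhigh betalow betahigh gammalow gammahigh hgammalow_pos hgammalow
    hgammahigh hblow hbhigh hDnonneg hlow hhigh
end

section
/- Let {u_n} ⊂ E_λ satisfy (1+‖u_n‖_λ)J'_{α,λ}(u_n) → 0 in E_λ* and J_{α,λ}(u_n) → c with c bounded. Then {‖u_n‖_λ} is bounded. More precisely, c + o(1) ≥ ((p-4)/(8p))(α‖∇u_n‖_{L²}⁴ + ‖u_n‖_λ²) - (2(p-2)²/(α(p-4)p))|a₀|²|A_∞|^{4/3}S^{-2}. -/
/-!
Subtracting `1/p` times the pairing `⟨J'(u_n), u_n⟩` from `J(u_n)` removes the `L^p` term: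
`J - ⟨J', u⟩/p = α(1/4 - 1/p)‖∇u‖⁴ + (1/2 - 1/p)(‖u‖_λ² - D_λ(u,u))`.
Since `p > 4` both coefficients are positive, and the only negative contribution
`D_λ(u,u) ≤ K ‖∇u‖²` is absorbed by Young's inequality into half of the quartic gradient
term, at the price of a constant multiple of `K²`. As the left-hand side converges to `c`,
this bounds `α‖∇u_n‖⁴ + ‖u_n‖_λ²` along the sequence.
-/

open Filter Topology

lemma mul_le_eps_mul_sq_add_sq_div {ε : ℝ} (hε : 0 < ε) (a b : ℝ) :
    a * b ≤ ε * a ^ 2 + b ^ 2 / (4 * ε) := by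
  have key : ε * a ^ 2 + b ^ 2 / (4 * ε) - a * b = (2 * ε * a - b) ^ 2 / (4 * ε) := by
    field_simp
    ring
  have : 0 ≤ (2 * ε * a - b) ^ 2 / (4 * ε) := by positivity
  linarith

lemma sub_one_div_mul_pairing_eq {p α g N D L : ℝ} (hp : p ≠ 0) :
    (α / 4 * g ^ 2 + 1 / 2 * N - 1 / 2 * D - 1 / p * L) - 1 / p * (α * g ^ 2 + N - D - L) =
      α * (p - 4) / (4 * p) * g ^ 2 + (p - 2) / (2 * p) * (N - D) := by
  field_simp
  ring

lemma coercive_lower_bound {p α K g N D : ℝ} (hp : 4 < p) (hα : 0 < α) (hN : 0 ≤ N)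
    (hD : D ≤ K * g) :
    (p - 4) / (8 * p) * (α * g ^ 2 + N) - 2 * (p - 2) ^ 2 / (α * (p - 4) * p) * K ^ 2 ≤
      α * (p - 4) / (4 * p) * g ^ 2 + (p - 2) / (2 * p) * (N - D) := by
  have hp0 : 0 < p := by linarith
  have hp4 : 0 < p - 4 := by linarith
  have young := mul_le_eps_mul_sq_add_sq_div (ε := α * (p - 4) / (8 * p)) (by positivity)
    g ((p - 2) / (2 * p) * K)
  have hyoung_const : ((p - 2) / (2 * p) * K) ^ 2 / (4 * (α * (p - 4) / (8 * p))) ≤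
      2 * (p - 2) ^ 2 / (α * (p - 4) * p) * K ^ 2 := by
    have : ((p - 2) / (2 * p) * K) ^ 2 / (4 * (α * (p - 4) / (8 * p))) =
        (1 / 4) * (2 * (p - 2) ^ 2 / (α * (p - 4) * p) * K ^ 2) := by
      field_simp
      ring
    rw [this]
    have : 0 ≤ 2 * (p - 2) ^ 2 / (α * (p - 4) * p) * K ^ 2 := by positivity
    linarith
  have hD' : (p - 2) / (2 * p) * D ≤ (p - 2) / (2 * p) * (K * g) :=
    mul_le_mul_of_nonneg_left hD (div_nonneg (by linarith) (by positivity))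
  have hN' : (p - 4) / (8 * p) * N ≤ (p - 2) / (2 * p) * N := by
    refine mul_le_mul_of_nonneg_right ?_ hN
    rw [div_le_div_iff₀ (by positivity) (by positivity)]
    nlinarith
  have split : (p - 4) / (8 * p) * (α * g ^ 2 + N) =
      α * (p - 4) / (8 * p) * g ^ 2 + (p - 4) / (8 * p) * N := by ring
  have halve : α * (p - 4) / (4 * p) * g ^ 2 =
      2 * (α * (p - 4) / (8 * p) * g ^ 2) := by ring
  linarith

lemma exists_bound_of_mul_le_tendsto {a c : ℝ} {x y : ℕ → ℝ} (ha : 0 < a)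
    (hxy : ∀ n, a * x n ≤ y n) (hy : Tendsto y atTop (𝓝 c)) : ∃ B, ∀ n, x n ≤ B := by
  obtain ⟨M, hM⟩ := hy.bddAbove_range
  refine ⟨M / a, fun n => ?_⟩
  rw [le_div_iff₀ ha, mul_comm]
  exact (hxy n).trans (hM ⟨n, rfl⟩)

lemma rpow_two_thirds_mul_sq {a m S : ℝ} (hm : 0 ≤ m) :
    (|a| * m ^ ((2 : ℝ) / 3) * S⁻¹) ^ 2 = a ^ 2 * m ^ ((4 : ℝ) / 3) / S ^ 2 := by
  have hm2 : (m ^ ((2 : ℝ) / 3)) ^ 2 = m ^ ((4 : ℝ) / 3) := by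
    rw [← Real.rpow_natCast, ← Real.rpow_mul hm]
    norm_num
  rw [mul_pow, mul_pow, hm2, sq_abs, inv_pow, ← div_eq_mul_inv]

/-- Here `g n = ‖∇u_n‖_{L²}²`, `N n = ‖u_n‖_λ²`, `D n = D_λ(u_n,u_n)`,
`L n = ‖u_n‖_{L^p}^p`, `Jval n = J_{α,λ}(u_n)`, `pair n = ⟨J'_{α,λ}(u_n), u_n⟩`
and `mA = |A_∞|`. -/
theorem stmt12_general (p alpha c S mA a0 : ℝ)
    (hp4 : 4 < p) (halpha : 0 < alpha) (hmA : 0 ≤ mA)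
    (g N D L Jval pair : ℕ → ℝ)
    (hNnn : ∀ n, 0 ≤ N n)
    (hJval : ∀ n, Jval n = alpha / 4 * g n ^ 2 + (1 / 2) * N n - (1 / 2) * D n - (1 / p) * L n)
    (hpair : ∀ n, pair n = alpha * g n ^ 2 + N n - D n - L n)
    (hJc : Tendsto Jval atTop (𝓝 c))
    (hPS : Tendsto pair atTop (𝓝 0))
    (hDbd : ∀ n, D n ≤ |a0| * mA ^ ((2 : ℝ) / 3) * S⁻¹ * g n) :
    (∃ B : ℝ, ∀ n, N n ≤ B) ∧
    ∃ eps : ℕ → ℝ, Tendsto eps atTop (𝓝 0) ∧ ∀ n,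
      (p - 4) / (8 * p) * (alpha * g n ^ 2 + N n) -
          2 * (p - 2) ^ 2 / (alpha * (p - 4) * p) * a0 ^ 2 * mA ^ ((4 : ℝ) / 3) / S ^ 2 ≤
        c + eps n := by
  set C := 2 * (p - 2) ^ 2 / (alpha * (p - 4) * p) * a0 ^ 2 * mA ^ ((4 : ℝ) / 3) / S ^ 2
  set F := fun n => Jval n - 1 / p * pair n
  have hF : Tendsto F atTop (𝓝 c) := by
    simpa [F] using hJc.sub (hPS.const_mul (1 / p))
  have hC : C = 2 * (p - 2) ^ 2 / (alpha * (p - 4) * p) *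
      (|a0| * mA ^ ((2 : ℝ) / 3) * S⁻¹) ^ 2 := by
    rw [rpow_two_thirds_mul_sq hmA]
    ring
  have lower : ∀ n, (p - 4) / (8 * p) * (alpha * g n ^ 2 + N n) - C ≤ F n := fun n => by
    simp only [F, hC, hJval, hpair, sub_one_div_mul_pairing_eq (by linarith : p ≠ 0)]
    exact coercive_lower_bound hp4 halpha (hNnn n) (hDbd n)
  refine ⟨?_, fun n => F n - c, by simpa using hF.sub_const c, fun n => by linarith [lower n]⟩
  refine exists_bound_of_mul_le_tendsto (a := (p - 4) / (8 * p)) (by positivity)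
    (fun n => ?_) (hF.add_const C)
  have : 0 ≤ (p - 4) / (8 * p) * (alpha * g n ^ 2) := by positivity
  linarith [lower n]

/-- Let `{u_n} ⊂ E_λ` satisfy `(1+‖u_n‖_λ)J'_{α,λ}(u_n) → 0` in `E_λ*`
and `J_{α,λ}(u_n) → c` with `c` bounded.  Then `{‖u_n‖_λ}` is bounded.  More precisely,
`c + o(1) ≥ ((p-4)/(8p))(α‖∇u_n‖_{L²}⁴ + ‖u_n‖_λ²)
- (2(p-2)²/(α(p-4)p))|a₀|²|A_∞|^{4/3}S⁻²`.
Here `g n = ‖∇u_n‖_{L²}²`, `N n = ‖u_n‖_λ²`, `D n = D_λ(u_n,u_n)`, `L n = ‖u_n‖_{L^p}^p`;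
`Jval n = J_{α,λ}(u_n)` and `pair n = ⟨J'_{α,λ}(u_n), u_n⟩ → 0` (a consequence of the PS
condition), and `mA = |A_∞|`, with the Hölder–Sobolev bound
`D_λ(u_n,u_n) ≤ |a₀||A_∞|^{2/3}S⁻¹‖∇u_n‖_{L²}²`. -/
theorem stmt12 (p alpha c S mA a0 : ℝ)
    (hp4 : 4 < p) (hp6 : p < 6) (halpha : 0 < alpha) (hS : 0 < S) (hmA : 0 ≤ mA)
    (g N D L Jval pair : ℕ → ℝ)
    (hgnn : ∀ n, 0 ≤ g n) (hNnn : ∀ n, 0 ≤ N n) (hDnn : ∀ n, 0 ≤ D n) (hLnn : ∀ n, 0 ≤ L n)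
    (hJval : ∀ n, Jval n = alpha / 4 * g n ^ 2 + (1 / 2) * N n - (1 / 2) * D n - (1 / p) * L n)
    (hpair : ∀ n, pair n = alpha * g n ^ 2 + N n - D n - L n)
    (hJc : Tendsto Jval atTop (𝓝 c))
    (hPS : Tendsto pair atTop (𝓝 0))
    (hDbd : ∀ n, D n ≤ |a0| * mA ^ ((2 : ℝ) / 3) * S⁻¹ * g n) :
    (∃ B : ℝ, ∀ n, N n ≤ B) ∧
    ∃ eps : ℕ → ℝ, Tendsto eps atTop (𝓝 0) ∧ ∀ n,
      (p - 4) / (8 * p) * (alpha * g n ^ 2 + N n) -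
          2 * (p - 2) ^ 2 / (alpha * (p - 4) * p) * a0 ^ 2 * mA ^ ((4 : ℝ) / 3) / S ^ 2 ≤
        c + eps n :=
  stmt12_general p alpha c S mA a0 hp4 halpha hmA g N D L Jval pair hNnn hJval hpair hJc hPS hDbd
end
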